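/- arXiv:math/0303343 — 4 statements merged into one kernel-verified Lean document; each statement's English description precedes it below -/
import Mathlib

section
/- If m > 0 is odd and gcd(m, n) = 1, then in ℤ[x] the ideal generated by r_{m,m} and r_{n,m} equals the ideal generated by p_{(m+1)/2}, where r_{k,m} := q_k - q_{k-m} with q, p the recursively defined polynomial sequences. -/
open Polynomial


noncomputable def myV : ℕ → Polynomial ℤ
  | 0 => -1
  | 1 => 1
  | (n+2) => X * myV (n+1) - myV n

noncomputable def myv (k : ℤ) : Polynomial ℤ :=
  if 0 ≤ k then myV k.toNat else -myV (1 - k).toNat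

lemma myv_coe (n : ℕ) : myv n = myV n := by simp [myv]

lemma myv_zero : myv 0 = -1 := by simpa [myV] using myv_coe 0
lemma myv_one : myv 1 = 1 := by simpa [myV] using myv_coe 1

lemma myv_neg (k : ℤ) : myv (1 - k) = -myv k := by
  rcases le_or_gt 1 k with h | h
  · rcases le_or_gt 2 k with h2 | h2
    · have hn : ¬ (0 : ℤ) ≤ 1 - k := by omega
      simp only [myv, if_neg hn, if_pos (by omega : (0:ℤ) ≤ k)]
      congr 2
      omega
    · have hk : k = 1 := by omega
      subst hk
      simp [myv_zero, myv_one]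
  · have h0 : (0:ℤ) ≤ 1 - k := by omega
    rcases eq_or_lt_of_le (by omega : k ≤ 0) with h1 | h1
    · have hk : k = 0 := by omega
      subst hk
      simp [myv_zero, myv_one]
    · simp only [myv, if_pos h0, if_neg (by omega : ¬ (0:ℤ) ≤ k)]
      rw [neg_neg]

lemma myv_rec_nat (n : ℕ) : myv ((n:ℤ)+2) = X * myv ((n:ℤ)+1) - myv (n:ℤ) := by
  rw [show (n:ℤ)+2 = ((n+2:ℕ):ℤ) by push_cast; ring, myv_coe,
      show (n:ℤ)+1 = ((n+1:ℕ):ℤ) by push_cast; ring, myv_coe, myv_coe]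
  simp [myV]

lemma myv_rec (k : ℤ) : myv (k + 1) = X * myv k - myv (k - 1) := by
  rcases le_or_gt 1 k with h | h
  · obtain ⟨n, rfl⟩ : ∃ n : ℕ, k = (n : ℤ) + 1 := ⟨(k-1).toNat, by omega⟩
    have h0 := myv_rec_nat n
    rw [show (n:ℤ)+1+1 = (n:ℤ)+2 by ring, show (n:ℤ)+1-1 = (n:ℤ) by ring]
    exact h0
  · obtain ⟨n, rfl⟩ : ∃ n : ℕ, k = -(n : ℤ) := ⟨(-k).toNat, by omega⟩
    rw [show -(n:ℤ) - 1 = 1 - ((n:ℤ)+2) by ring, myv_neg]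
    rw [show -(n:ℤ) + 1 = 1 - (n:ℤ) by ring, myv_neg]
    rw [show -(n:ℤ) = 1 - ((n:ℤ)+1) by ring, myv_neg]
    have h0 := myv_rec_nat n
    linear_combination -h0

lemma myTwoStep {P : ℕ → Prop} (h0 : P 0) (h1 : P 1)
    (ih : ∀ n, P n → P (n + 1) → P (n + 2)) : ∀ n, P n := by
  have key : ∀ n, P n ∧ P (n+1) := by
    intro n
    induction n with
    | zero => exact ⟨h0, h1⟩
    | succ k h => exact ⟨h.2, ih k h.1 h.2⟩
  exact fun n => (key n).1

section
variable (q : ℤ → Polynomial ℤ) (hq0 : q 0 = -2) (hq1 : q 1 = -X)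
  (hqrec : ∀ m : ℤ, q (m + 1) = X * q m - q (m - 1))

include hqrec in
lemma q_back (k : ℤ) : q (k - 1) = X * q k - q (k + 1) := by
  linear_combination hqrec k

include hq0 hq1 hqrec in
lemma q_symm : ∀ k : ℤ, q (-k) = q k := by
  have key : ∀ n : ℕ, q (-(n:ℤ)) = q (n:ℤ) := by
    apply myTwoStep
    · norm_num
    · have h := hqrec 0
      norm_num at h
      push_cast
      have : q (-1) = X * q 0 - q 1 := by linear_combination h
      rw [this, hq0, hq1]; ring
    · intro n ih1 ih2
      have hb := q_back q hqrec (-(n:ℤ)-1)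
      rw [show (-(n:ℤ)-1-1) = -((n:ℤ)+2) by ring, show (-(n:ℤ)-1+1) = -(n:ℤ) by ring,
        show (-(n:ℤ)-1) = -((n:ℤ)+1) by ring] at hb
      push_cast at ih1 ih2 ⊢
      rw [hb, ih1, ih2]
      have hf := hqrec ((n:ℤ)+1)
      rw [show ((n:ℤ)+1+1) = (n:ℤ)+2 by ring, show ((n:ℤ)+1-1) = (n:ℤ) by ring] at hf
      linear_combination -hf
  intro k
  rcases le_or_gt 0 k with h | h
  · obtain ⟨n, rfl⟩ : ∃ n : ℕ, k = (n : ℤ) := ⟨k.toNat, by omega⟩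
    exact key n
  · obtain ⟨n, rfl⟩ : ∃ n : ℕ, k = -(n : ℤ) := ⟨(-k).toNat, by omega⟩
    rw [neg_neg]
    exact (key n).symm

include hq0 hq1 hqrec in
lemma G_id : ∀ k : ℤ, q (k - 1) - q k = (X - 2) * myv k := by
  have qs := q_symm q hq0 hq1 hqrec
  have Gnat : ∀ n : ℕ, q ((n:ℤ) - 1) - q (n:ℤ) = (X - 2) * myv (n:ℤ) := by
    apply myTwoStep
    · have h1 : ((0:ℕ):ℤ) - 1 = -1 := by norm_num
      rw [h1, show ((0:ℕ):ℤ) = (0:ℤ) by norm_num, show (-1 : ℤ) = -(1:ℤ) from rfl, qs 1,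
        hq0, hq1, myv_zero]
      ring
    · rw [show ((1:ℕ):ℤ) - 1 = (0:ℤ) by norm_num, show ((1:ℕ):ℤ) = (1:ℤ) by norm_num,
        hq0, hq1, myv_one]
      ring
    · intro n ih1 ih2
      push_cast at ih1 ih2 ⊢
      have h2 := hqrec ((n:ℤ)+1)
      rw [show ((n:ℤ)+1+1) = (n:ℤ)+2 by ring, show ((n:ℤ)+1-1) = (n:ℤ) by ring] at h2
      have h1 := hqrec (n:ℤ)
      have hv := myv_rec_nat n
      rw [show ((n:ℤ)+2-1) = (n:ℤ)+1 by ring]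
      rw [show ((n:ℤ)+1-1) = (n:ℤ) by ring] at ih2
      linear_combination X * ih2 - ih1 - h2 - (X - 2) * hv + h1
  have Gneg : ∀ n : ℕ, q (-(n:ℤ) - 1) - q (-(n:ℤ)) = (X - 2) * myv (-(n:ℤ)) := by
    apply myTwoStep
    · have := Gnat 0
      push_cast at this ⊢
      simpa using this
    · push_cast
      have h2 : q (-2 : ℤ) = q 2 := qs 2
      have h1 : q (-1 : ℤ) = q 1 := qs 1
      have h3 := hqrec 1
      rw [show ((1:ℤ)+1) = 2 by norm_num, show ((1:ℤ)-1) = 0 by norm_num] at h3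
      have hv : myv (-1 : ℤ) = -myv (2:ℤ) := by
        rw [show (-1 : ℤ) = 1 - 2 by norm_num, myv_neg]
      have hv2 : myv (2:ℤ) = X * myv 1 - myv 0 := by
        have := myv_rec_nat 0; push_cast at this; simpa using this
      rw [h2, h1, h3, hv, hv2, myv_zero, myv_one, hq0, hq1]
      ring
    · intro n ih1 ih2
      push_cast at ih1 ih2 ⊢
      have hb := q_back q hqrec (-(n:ℤ)-2)
      rw [show (-(n:ℤ)-2-1) = -(n:ℤ)-3 by ring, show (-(n:ℤ)-2+1) = -(n:ℤ)-1 by ring] at hb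
      have hb2 := hqrec (-(n:ℤ)-1)
      rw [show (-(n:ℤ)-1+1) = -(n:ℤ) by ring, show (-(n:ℤ)-1-1) = -(n:ℤ)-2 by ring] at hb2
      have hv := myv_rec (-(n:ℤ)-1)
      rw [show (-(n:ℤ)-1+1) = -(n:ℤ) by ring, show (-(n:ℤ)-1-1) = -(n:ℤ)-2 by ring] at hv
      rw [show (-((n:ℤ)+1) - 1) = -(n:ℤ)-2 by ring, show (-((n:ℤ)+1)) = -(n:ℤ)-1 by ring] at ih2
      rw [show (-((n:ℤ)+2)) = -(n:ℤ)-2 by ring, show (-(n:ℤ)-2-1) = -(n:ℤ)-3 by ring]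
      linear_combination X * ih2 - ih1 + hb - (X - 2) * hv - hb2
  intro k
  rcases le_or_gt 0 k with h | h
  · obtain ⟨n, rfl⟩ : ∃ n : ℕ, k = (n : ℤ) := ⟨k.toNat, by omega⟩
    exact Gnat n
  · obtain ⟨n, rfl⟩ : ∃ n : ℕ, k = -(n : ℤ) := ⟨(-k).toNat, by omega⟩
    exact Gneg n

include hq0 hq1 hqrec in
lemma C_id : ∀ a b : ℤ, myv (a + b) + myv (a - b) = -q b * myv a := by
  have qs := q_symm q hq0 hq1 hqrec
  intro a
  have Cnat : ∀ n : ℕ, myv (a + (n:ℤ)) + myv (a - (n:ℤ)) = -q (n:ℤ) * myv a := by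
    apply myTwoStep
    · push_cast
      rw [show a + 0 = a by ring, show a - 0 = a by ring, hq0]
      ring
    · push_cast
      rw [hq1]
      linear_combination myv_rec a
    · intro n ih1 ih2
      push_cast at ih1 ih2 ⊢
      have hv1 : myv (a + (↑n+2)) = X * myv (a + ↑n + 1) - myv (a + ↑n) := by
        have h := myv_rec (a + ↑n + 1)
        rw [show a + (n:ℤ) + 1 + 1 = a + ((n:ℤ)+2) by ring,
          show a + (n:ℤ) + 1 - 1 = a + (n:ℤ) by ring] at h
        exact h
      have hv2 : myv (a - (↑n+2)) = X * myv (a - ↑n - 1) - myv (a - ↑n) := by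
        have h := myv_rec (a - ↑n - 1)
        rw [show a - (n:ℤ) - 1 + 1 = a - (n:ℤ) by ring,
          show a - (n:ℤ) - 1 - 1 = a - ((n:ℤ)+2) by ring] at h
        linear_combination h
      have hq := hqrec ((n:ℤ)+1)
      rw [show (n:ℤ)+1+1 = (n:ℤ)+2 by ring, show (n:ℤ)+1-1 = (n:ℤ) by ring] at hq
      rw [show a + ((n:ℤ)+1) = a + (n:ℤ) + 1 by ring, show a - ((n:ℤ)+1) = a - (n:ℤ) - 1 by ring] at ih2
      rw [hv1, hv2, hq]
      linear_combination X * ih2 - ih1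
  intro b
  rcases le_or_gt 0 b with h | h
  · obtain ⟨n, rfl⟩ : ∃ n : ℕ, b = (n : ℤ) := ⟨b.toNat, by omega⟩
    exact Cnat n
  · obtain ⟨n, rfl⟩ : ∃ n : ℕ, b = -(n : ℤ) := ⟨(-b).toNat, by omega⟩
    have h0 := Cnat n
    rw [show a + -(n:ℤ) = a - (n:ℤ) by ring, show a - -(n:ℤ) = a + (n:ℤ) by ring, qs n]
    linear_combination h0

include hq0 hq1 hqrec in
lemma F_id : ∀ a b : ℤ, (X - 2) * (myv a * myv b) = q (a - b) - q (a + b - 1) := by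
  have hG := G_id q hq0 hq1 hqrec
  intro a
  have Fnat : ∀ n : ℕ, (X - 2) * (myv a * myv (n:ℤ)) = q (a - (n:ℤ)) - q (a + (n:ℤ) - 1) := by
    apply myTwoStep
    · push_cast
      rw [show a - 0 = a by ring, show a + 0 - 1 = a - 1 by ring, myv_zero]
      linear_combination hG a
    · push_cast
      rw [show a + 1 - 1 = a by ring, myv_one]
      linear_combination -hG a
    · intro n ih1 ih2
      push_cast at ih1 ih2 ⊢
      have hv := myv_rec_nat n
      have hb1 : q (a - (↑n+2)) = X * q (a - ↑n - 1) - q (a - ↑n) := by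
        have h := q_back q hqrec (a - ↑n - 1)
        rw [show a - (n:ℤ) - 1 - 1 = a - ((n:ℤ)+2) by ring,
          show a - (n:ℤ) - 1 + 1 = a - (n:ℤ) by ring] at h
        exact h
      have hb2 : q (a + (↑n+2) - 1) = X * q (a + ↑n) - q (a + ↑n - 1) := by
        have h := hqrec (a + ↑n)
        rw [show a + (n:ℤ) + 1 = a + ((n:ℤ)+2) - 1 by ring] at h
        exact h
      rw [show a - ((n:ℤ)+1) = a - (n:ℤ) - 1 by ring,
        show a + ((n:ℤ)+1) - 1 = a + (n:ℤ) by ring] at ih2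
      rw [hv, hb1, hb2]
      linear_combination X * ih2 - ih1
  intro b
  rcases le_or_gt 0 b with h | h
  · obtain ⟨n, rfl⟩ : ∃ n : ℕ, b = (n : ℤ) := ⟨b.toNat, by omega⟩
    exact Fnat n
  · obtain ⟨n, hn⟩ : ∃ n : ℕ, b = 1 - (n:ℤ) := ⟨(1-b).toNat, by omega⟩
    subst hn
    have h0 := Fnat n
    rw [show a - (1 - (n:ℤ)) = a + ↑n - 1 by ring, show a + (1 - (n:ℤ)) - 1 = a - ↑n by ring,
      myv_neg]
    linear_combination -h0

end

lemma span_pair_add (x y z u : Polynomial ℤ) (h : x + z = u * y) :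
    Ideal.span {x, y} = Ideal.span {z, y} := by
  have hz : z ∈ Ideal.span {x, y} := Ideal.mem_span_pair.2 ⟨-1, u, by linear_combination -h⟩
  have hx : x ∈ Ideal.span {z, y} := Ideal.mem_span_pair.2 ⟨-1, u, by linear_combination -h⟩
  refine le_antisymm (Ideal.span_le.2 ?_) (Ideal.span_le.2 ?_) <;>
    rw [Set.insert_subset_iff, Set.singleton_subset_iff]
  · exact ⟨hx, Ideal.subset_span (by simp)⟩
  · exact ⟨hz, Ideal.subset_span (by simp)⟩

section
variable (q : ℤ → Polynomial ℤ) (hq0 : q 0 = -2) (hq1 : q 1 = -X)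
  (hqrec : ∀ m : ℤ, q (m + 1) = X * q m - q (m - 1))

include hq0 hq1 hqrec in
lemma euclid_core : ∀ N : ℕ, ∀ a b : ℤ, 1 ≤ a → 1 ≤ b →
    IsCoprime (2*a - 1) (2*b - 1) → (2*a - 1).toNat + (2*b - 1).toNat ≤ N →
    Ideal.span {myv a, myv b} = ⊤ := by
  intro N
  induction N with
  | zero =>
    intro a b ha hb hcop hle
    exfalso; omega
  | succ N IH =>
    have main : ∀ a b : ℤ, 1 ≤ a → 1 ≤ b → b < a →
        IsCoprime (2*a - 1) (2*b - 1) →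
        (2*a - 1).toNat + (2*b - 1).toNat ≤ N + 1 →
        Ideal.span {myv a, myv b} = ⊤ := by
      intro a b ha hb hba hcop hle
      have hC := C_id q hq0 hq1 hqrec b (a - b)
      rw [show b + (a - b) = a by ring, show b - (a - b) = 2*b - a by ring] at hC
      have hspan : Ideal.span {myv a, myv b} = Ideal.span {myv (2*b - a), myv b} :=
        span_pair_add _ _ _ _ hC
      rcases le_or_gt 1 (2*b - a) with hc1 | hc1
      · rw [hspan]
        refine IH (2*b - a) b hc1 hb ?_ (by omega)
        have h2 := (hcop.neg_left).add_mul_left_left 2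
        rwa [show -(2*a - 1) + (2*b - 1)*2 = 2*(2*b - a) - 1 by ring] at h2
      · have hneg : myv (2*b - a) + myv (1 - (2*b - a)) = 0 * myv b := by
          rw [myv_neg]; ring
        have hspan2 : Ideal.span {myv (2*b - a), myv b} =
            Ideal.span {myv (1 - (2*b - a)), myv b} := span_pair_add _ _ _ _ hneg
        rw [hspan, hspan2]
        refine IH (1 - (2*b - a)) b (by omega) hb ?_ (by omega)
        have h2 := hcop.add_mul_left_left (-2)
        rwa [show (2*a - 1) + (2*b - 1)*(-2) = 2*(1 - (2*b - a)) - 1 by ring] at h2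
    intro a b ha hb hcop hle
    by_cases hA : a = 1
    · subst hA
      have h1 : myv (1:ℤ) ∈ Ideal.span {myv (1:ℤ), myv b} :=
        Ideal.subset_span (by simp)
      rw [myv_one] at h1
      exact (Ideal.eq_top_iff_one _).2 h1
    by_cases hB : b = 1
    · subst hB
      have h1 : myv (1:ℤ) ∈ Ideal.span {myv a, myv (1:ℤ)} :=
        Ideal.subset_span (by simp)
      rw [myv_one] at h1
      exact (Ideal.eq_top_iff_one _).2 h1
    have hne : a ≠ b := by
      rintro rfl
      rcases Int.isUnit_iff.1 (isCoprime_self.1 hcop) with h | h <;> omega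
    rcases lt_or_gt_of_ne hne with hlt | hgt
    · rw [Ideal.span_pair_comm]
      exact main b a hb ha hlt hcop.symm (by omega)
    · exact main a b ha hb hgt hcop hle

include hq0 hq1 hqrec in
lemma euclid (a b : ℤ) (ha : 1 ≤ a) (hcop : IsCoprime (2*a - 1) (2*b - 1)) :
    Ideal.span {myv a, myv b} = ⊤ := by
  rcases le_or_gt 1 b with hb | hb
  · exact euclid_core q hq0 hq1 hqrec ((2*a-1).toNat + (2*b-1).toNat) a b ha hb hcop le_rfl
  · have hneg : myv b + myv (1 - b) = 0 * myv a := by rw [myv_neg]; ring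
    have hspan : Ideal.span {myv a, myv b} = Ideal.span {myv a, myv (1 - b)} := by
      rw [Ideal.span_pair_comm, span_pair_add _ _ _ _ hneg, Ideal.span_pair_comm]
    rw [hspan]
    have h2 := hcop.neg_right
    rw [show -(2*b - 1) = 2*(1 - b) - 1 by ring] at h2
    exact euclid_core q hq0 hq1 hqrec ((2*a-1).toNat + (2*(1-b)-1).toNat) a (1 - b) ha
      (by omega) h2 le_rfl

end

/-- For odd `m > 0` with `gcd(m,n) = 1`, the ideal generated by `r m m` and
`r n m` in `ℤ[x]` equals the ideal generated by `p ((m+1)/2)`. -/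
theorem stmt5 (p : ℕ → Polynomial ℤ)
    (hp0 : p 0 = 2 - X) (hp1 : p 1 = X - 2)
    (hprec : ∀ m : ℕ, 1 ≤ m → p (m + 1) = X * p m - p (m - 1))
    (q : ℤ → Polynomial ℤ)
    (hq0 : q 0 = -2) (hq1 : q 1 = -X)
    (hqrec : ∀ m : ℤ, q (m + 1) = X * q m - q (m - 1))
    (r : ℤ → ℤ → Polynomial ℤ) (hr : ∀ k m : ℤ, r k m = q k - q (k - m))
    (m n : ℤ) (hm : Odd m) (hpos : 0 < m) (hgcd : Int.gcd m n = 1) :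
    Ideal.span {r m m, r n m} = Ideal.span {p (((m + 1) / 2).toNat)} := by
  obtain ⟨t, ht⟩ := hm
  set d : ℤ := t + 1 with hd_def
  have hd : m = 2*d - 1 := by omega
  have hd1 : 1 ≤ d := by omega
  have hdiv : (m + 1) / 2 = d := by omega
  have pv : ∀ nn : ℕ, p nn = (X - 2) * myv (nn:ℤ) := by
    apply myTwoStep
    · rw [hp0]; push_cast; rw [myv_zero]; ring
    · rw [hp1]; push_cast; rw [myv_one]; ring
    · intro k ih1 ih2
      have hp := hprec (k+1) (by omega)
      rw [show k+1+1 = k+2 from rfl, show k+1-1 = k from rfl] at hp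
      rw [hp, ih1, ih2]
      push_cast
      have hv := myv_rec_nat k
      linear_combination -(X-2) * hv
  have hpd : p (((m+1)/2).toNat) = (X - 2) * myv d := by
    rw [hdiv]
    have h0 := pv d.toNat
    rw [Int.toNat_of_nonneg (by omega)] at h0
    exact h0
  set e : ℤ := n - d + 1 with he_def
  have hF := F_id q hq0 hq1 hqrec
  have h1 : r m m = -((X - 2) * myv d * myv d) := by
    rw [hr, show m - m = (0:ℤ) by ring, hq0]
    have h := hF d d
    rw [show d - d = (0:ℤ) by ring, show d + d - 1 = m by omega, hq0] at h
    linear_combination h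
  have h2 : r n m = -((X - 2) * myv d * myv e) := by
    rw [hr]
    have h := hF e d
    rw [show e - d = n - m by omega, show e + d - 1 = n by omega] at h
    linear_combination h
  have hmn : IsCoprime m n := Int.isCoprime_iff_gcd_eq_one.2 hgcd
  have hm2 : IsCoprime m 2 := ⟨1, -t, by omega⟩
  have h2n : IsCoprime m (2*n) := hm2.mul_right hmn
  have hcop : IsCoprime (2*d - 1) (2*e - 1) := by
    have h3 := h2n.add_mul_left_right (-1)
    have e1 : 2*n + m*(-1) = 2*e - 1 := by omega
    rw [e1] at h3
    rw [← hd]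
    exact h3
  have htop : Ideal.span {myv d, myv e} = ⊤ := euclid q hq0 hq1 hqrec d e hd1 hcop
  rw [hpd]
  apply le_antisymm
  · rw [Ideal.span_le, Set.insert_subset_iff, Set.singleton_subset_iff]
    constructor <;> rw [SetLike.mem_coe, Ideal.mem_span_singleton]
    · exact ⟨-(myv d), by linear_combination h1⟩
    · exact ⟨-(myv e), by linear_combination h2⟩
  · rw [Ideal.span_le, Set.singleton_subset_iff, SetLike.mem_coe]
    obtain ⟨α, β, hab⟩ := Ideal.mem_span_pair.1 ((Ideal.eq_top_iff_one _).1 htop)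
    exact Ideal.mem_span_pair.2 ⟨-α, -β,
      by linear_combination (-α)*h1 + (-β)*h2 + ((X-2)*myv d) * hab⟩
end

section
/- If A is a finite abelian group with m invariant factors, then the minimal number of generators of the abelian group Sym²(A) (the symmetric square of A over ℤ) is m(m+1)/2. -/
open TensorProduct

/-- The symmetric square of a `ℤ`-module `A`: the quotient of `A ⊗[ℤ] A` by the
submodule generated by the elements `a ⊗ b - b ⊗ a`. -/
abbrev SymSq (A : Type*) [AddCommGroup A] :=
  (A ⊗[ℤ] A) ⧸
    Submodule.span ℤ {z : A ⊗[ℤ] A | ∃ a b : A, z = a ⊗ₜ[ℤ] b - b ⊗ₜ[ℤ] a}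

section Aux
variable {m : ℕ} {d : Fin m → ℕ}

/-- The abelian group `⊕ ℤ/dᵢ`. -/
abbrev Amod (d : Fin m → ℕ) := ∀ i : Fin m, ZMod (d i)

/-- Index set for pairs `i ≤ j`. -/
abbrev Idx (m : ℕ) := { q : Fin m × Fin m // q.1 ≤ q.2 }

/-- Standard generators of `Amod d`. -/
def EE (d : Fin m → ℕ) (i : Fin m) : Amod d := Pi.single i 1

/-- The symmetry relation submodule. -/
abbrev SRel (d : Fin m → ℕ) : Submodule ℤ (Amod d ⊗[ℤ] Amod d) :=
  Submodule.span ℤ {z | ∃ a b : Amod d, z = a ⊗ₜ[ℤ] b - b ⊗ₜ[ℤ] a}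

/-- Quotient map to the symmetric square. -/
noncomputable def smk (x : Amod d ⊗[ℤ] Amod d) : SymSq (Amod d) :=
  Submodule.Quotient.mk x

/-- The candidate generating family of the symmetric square. -/
noncomputable def ff (d : Fin m → ℕ) (s : Idx m) : SymSq (Amod d) :=
  smk (EE d s.1.1 ⊗ₜ[ℤ] EE d s.1.2)

lemma EE_apply (i k : Fin m) : (EE d i) k = if k = i then 1 else 0 := by
  unfold EE
  split_ifs with h
  · subst h; simp
  · exact Pi.single_eq_of_ne h _

lemma sum_single {ι : Type*} [Fintype ι] [DecidableEq ι] {n : ℕ} [NeZero n]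
    (v : ι → ZMod n) :
    ∑ s : ι, ((v s).val : ℤ) • Pi.single s (1 : ZMod n) = v := by
  funext j
  rw [Finset.sum_apply]
  have : ∀ s : ι, ((((v s).val : ℤ) • Pi.single s (1 : ZMod n) : ι → ZMod n)) j
      = if j = s then v j else 0 := by
    intro s
    simp only [Pi.smul_apply, Pi.single_apply]
    split_ifs with h
    · subst h; simp [ZMod.natCast_val, ZMod.cast_id]
    · simp [Pi.single_eq_of_ne h]
  rw [Finset.sum_congr rfl fun s _ => this s]
  simp

lemma sum_EE (hd : ∀ i, 1 < d i) (a : Amod d) :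
    ∑ i : Fin m, ((a i).val : ℤ) • EE d i = a := by
  have hne : ∀ i, NeZero (d i) := fun i => ⟨by have := hd i; omega⟩
  funext j
  rw [Finset.sum_apply]
  have : ∀ i : Fin m, (((a i).val : ℤ) • EE d i) j
      = if j = i then a j else 0 := by
    intro i
    simp only [Pi.smul_apply, EE, Pi.single_apply]
    split_ifs with h
    · subst h; haveI := hne j; simp [ZMod.natCast_val, ZMod.cast_id]
    · simp [Pi.single_eq_of_ne h]
  rw [Finset.sum_congr rfl fun i _ => this i]
  simp

lemma smk_EE_mem (i j : Fin m) :
    smk (EE d i ⊗ₜ[ℤ] EE d j) ∈ Submodule.span ℤ (Set.range (ff d)) := by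
  rcases le_total i j with h | h
  · exact Submodule.subset_span ⟨⟨(i, j), h⟩, rfl⟩
  · have : smk (EE d i ⊗ₜ[ℤ] EE d j) = smk (EE d j ⊗ₜ[ℤ] EE d i) := by
      apply (Submodule.Quotient.eq _).mpr
      exact Submodule.subset_span ⟨EE d i, EE d j, rfl⟩
    rw [this]
    exact Submodule.subset_span ⟨⟨(j, i), h⟩, rfl⟩

lemma span_ff_top (hd : ∀ i, 1 < d i) :
    Submodule.span ℤ (Set.range (ff d)) = ⊤ := by
  rw [eq_top_iff]
  rintro x -
  obtain ⟨y, rfl⟩ := Submodule.Quotient.mk_surjective (SRel d) x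
  have hy : y ∈ Submodule.span ℤ {t : Amod d ⊗[ℤ] Amod d | ∃ a b, a ⊗ₜ b = t} := by
    erw [TensorProduct.span_tmul_eq_top]; trivial
  have key : ∀ t ∈ Submodule.span ℤ {t : Amod d ⊗[ℤ] Amod d | ∃ a b, a ⊗ₜ b = t},
      (SRel d).mkQ t ∈ Submodule.span ℤ (Set.range (ff d)) := by
    intro t ht
    refine Submodule.span_induction ?_ ?_ ?_ ?_ ht
    · rintro t ⟨a, b, rfl⟩
      rw [← sum_EE hd a, ← sum_EE hd b, TensorProduct.sum_tmul, map_sum]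
      refine Submodule.sum_mem _ fun i _ => ?_
      rw [TensorProduct.tmul_sum, map_sum]
      refine Submodule.sum_mem _ fun j _ => ?_
      rw [← TensorProduct.smul_tmul', TensorProduct.tmul_smul, map_smul, map_smul]
      exact Submodule.smul_mem _ _ (Submodule.smul_mem _ _ (smk_EE_mem i j))
    · simp
    · intro u v _ _ hu hv
      rw [map_add]; exact Submodule.add_mem _ hu hv
    · intro c u _ hu
      rw [map_smul]; exact Submodule.smul_mem _ _ hu
  exact key y hy

variable (p : ℕ) (hp : ∀ i, p ∣ d i)

/-- The symmetric bilinear form used to detect the lower bound. -/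
noncomputable def Bfun (a b : Amod d) : Idx m → ZMod p := fun s =>
  if s.1.1 = s.1.2 then
    ZMod.castHom (hp s.1.1) (ZMod p) (a s.1.1) * ZMod.castHom (hp s.1.1) (ZMod p) (b s.1.1)
  else
    ZMod.castHom (hp s.1.1) (ZMod p) (a s.1.1) * ZMod.castHom (hp s.1.2) (ZMod p) (b s.1.2)
    + ZMod.castHom (hp s.1.2) (ZMod p) (a s.1.2) * ZMod.castHom (hp s.1.1) (ZMod p) (b s.1.1)

lemma Bfun_symm (a b : Amod d) : Bfun p hp a b = Bfun p hp b a := by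
  funext s; unfold Bfun; split_ifs <;> ring

/-- `Bfun` as a bilinear map. -/
noncomputable def Bl : Amod d →ₗ[ℤ] Amod d →ₗ[ℤ] (Idx m → ZMod p) :=
  LinearMap.mk₂ ℤ (Bfun p hp)
    (fun a a' b => by funext s; simp only [Bfun, Pi.add_apply, map_add]; split_ifs <;> ring)
    (fun c a b => by
      funext s
      simp only [Bfun, Pi.smul_apply, map_zsmul, smul_mul_assoc, smul_add]
      split_ifs <;> simp [smul_add])
    (fun a b b' => by funext s; simp only [Bfun, Pi.add_apply, map_add]; split_ifs <;> ring)
    (fun c a b => by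
      funext s
      simp only [Bfun, Pi.smul_apply, map_zsmul, mul_smul_comm, smul_add]
      split_ifs <;> simp [smul_add])

/-- The induced linear map on the symmetric square. -/
noncomputable def gsym : SymSq (Amod d) →ₗ[ℤ] (Idx m → ZMod p) :=
  Submodule.liftQ (SRel d) (TensorProduct.lift (Bl p hp)) (by
    rw [Submodule.span_le]
    rintro z ⟨a, b, rfl⟩
    simp only [SetLike.mem_coe, LinearMap.mem_ker, map_sub, TensorProduct.lift.tmul]
    change TensorProduct.lift (Bl p hp) (a ⊗ₜ[ℤ] b - b ⊗ₜ[ℤ] a) = 0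
    erw [map_sub, TensorProduct.lift.tmul, TensorProduct.lift.tmul]
    show Bl p hp a b - Bl p hp b a = 0
    show Bfun p hp a b - Bfun p hp b a = 0
    rw [Bfun_symm]; simp)

lemma gsym_tmul (a b : Amod d) : gsym p hp (smk (a ⊗ₜ[ℤ] b)) = Bfun p hp a b := rfl

lemma Bfun_EE {i j : Fin m} (hij : i ≤ j) :
    Bfun p hp (EE d i) (EE d j) = Pi.single (⟨(i, j), hij⟩ : Idx m) 1 := by
  funext s
  obtain ⟨⟨k, l⟩, hkl⟩ := s
  simp only [Bfun, EE_apply, Pi.single_apply, Subtype.mk.injEq, Prod.mk.injEq]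
  have h1 : ∀ (c : Prop) [Decidable c] (x : Fin m),
      (ZMod.castHom (hp x) (ZMod p)) (if c then 1 else 0) = if c then 1 else 0 := by
    intro c _ x; split_ifs <;> [exact map_one _; exact map_zero _]
  rw [h1, h1, h1, h1]
  by_cases hki : k = i <;> by_cases hlj : l = j <;> by_cases hkj : k = j <;>
    by_cases hli : l = i <;> by_cases hkl' : k = l <;>
    simp_all <;> first
      | rfl
      | (exfalso; subst_vars;
         first
           | exact hkl' (le_antisymm hkl hij)
           | exact hki (le_antisymm hij hkl)
           | omega)

lemma gsym_ff (s : Idx m) : gsym p hp (ff d s) = Pi.single s 1 := by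
  obtain ⟨⟨i, j⟩, hij⟩ := s
  rw [show ff d ⟨(i, j), hij⟩ = smk (EE d i ⊗ₜ[ℤ] EE d j) from rfl, gsym_tmul,
    Bfun_EE p hp hij]

lemma card_Idx : Fintype.card (Idx m) = m * (m + 1) / 2 := by
  rw [← Fintype.card_congr (Sym2.sortEquiv (α := Fin m)), Sym2.card, Fintype.card_fin,
    Nat.choose_two_right, Nat.add_sub_cancel, Nat.mul_comm]

end Aux

/-- If `A` is a finite abelian group with `m` invariant factors
(`A ≃ ℤ/d₁ ⊕ ⋯ ⊕ ℤ/d_m`, `d₁ ∣ d₂ ∣ ⋯ ∣ d_m`, `dᵢ > 1`), then the minimal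
number of generators of `Sym²(A)` is `m(m+1)/2`. -/
theorem stmt11 (m : ℕ) (d : Fin m → ℕ) (hd : ∀ i, 1 < d i)
    (hdvd : ∀ i j : Fin m, i ≤ j → d i ∣ d j) :
    sInf {k : ℕ | ∃ S : Finset (SymSq (∀ i : Fin m, ZMod (d i))),
        S.card = k ∧
        Submodule.span ℤ (S : Set (SymSq (∀ i : Fin m, ZMod (d i)))) = ⊤} =
      m * (m + 1) / 2 := by
  classical
  rcases Nat.eq_zero_or_pos m with hm | hm
  · subst hm
    have h0 : (0 : ℕ) ∈ {k : ℕ | ∃ S : Finset (SymSq (Amod d)),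
        S.card = k ∧ Submodule.span ℤ (S : Set (SymSq (Amod d))) = ⊤} := by
      refine ⟨∅, Finset.card_empty, ?_⟩
      rw [Finset.coe_empty, Submodule.span_empty]
      have hzero : ∀ x : SymSq (Amod d), x = 0 := by
        intro x
        obtain ⟨y, rfl⟩ := Submodule.Quotient.mk_surjective (SRel d) x
        rw [Subsingleton.elim y 0, Submodule.Quotient.mk_zero]
      ext x
      simp [hzero x]
    rw [Nat.sInf_eq_zero.mpr (Or.inl h0)]
  · -- m > 0
    set i0 : Fin m := ⟨0, hm⟩ with hi0
    set p : ℕ := (d i0).minFac with hpdef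
    have hpp : p.Prime := Nat.minFac_prime (by have := hd i0; omega)
    haveI : Fact p.Prime := ⟨hpp⟩
    have hp : ∀ i, p ∣ d i :=
      fun i => (Nat.minFac_dvd _).trans (hdvd i0 i (by simp [hi0, Fin.le_def]))
    have hfinj : Function.Injective (ff d) := by
      intro s t h
      have h2 := congrArg (gsym p hp) h
      rw [gsym_ff, gsym_ff] at h2
      by_contra hst
      have h3 := congrFun h2 s
      rw [Pi.single_eq_same, Pi.single_eq_of_ne hst] at h3
      exact one_ne_zero h3
    have hwit : (m * (m + 1) / 2) ∈ {k : ℕ | ∃ S : Finset (SymSq (Amod d)),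
        S.card = k ∧ Submodule.span ℤ (S : Set (SymSq (Amod d))) = ⊤} := by
      refine ⟨Finset.image (ff d) Finset.univ, ?_, ?_⟩
      · rw [Finset.card_image_of_injective _ hfinj, Finset.card_univ, card_Idx]
      · rw [Finset.coe_image, Finset.coe_univ, Set.image_univ, span_ff_top hd]
    apply le_antisymm (Nat.sInf_le hwit)
    apply le_csInf ⟨_, hwit⟩
    rintro k ⟨S, rfl, hS⟩
    have hsurj : LinearMap.range (gsym p hp) = ⊤ := by
      rw [eq_top_iff]
      rintro v -
      rw [← sum_single v]
      refine Submodule.sum_mem _ fun s _ => Submodule.smul_mem _ _ ?_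
      exact ⟨ff d s, gsym_ff p hp s⟩
    have hmap : Submodule.span ℤ (gsym p hp '' (S : Set (SymSq (Amod d)))) = ⊤ := by
      rw [← Submodule.map_span, hS, Submodule.map_top, hsurj]
    have hPspan :
        Submodule.span (ZMod p) (gsym p hp '' (S : Set (SymSq (Amod d)))) = ⊤ := by
      rw [eq_top_iff]
      rintro v -
      exact Submodule.span_le_restrictScalars ℤ (ZMod p) _
        (hmap ▸ Submodule.mem_top)
    have hfr : Module.finrank (ZMod p) (Idx m → ZMod p) = m * (m + 1) / 2 := by
      rw [Module.finrank_pi, card_Idx]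
    calc m * (m + 1) / 2 = Module.finrank (ZMod p) (Idx m → ZMod p) := hfr.symm
      _ = (gsym p hp '' (S : Set (SymSq (Amod d)))).finrank (ZMod p) := by
          rw [Set.finrank, hPspan, finrank_top]
      _ = ((S.image (gsym p hp) : Finset (Idx m → ZMod p)) : Set (Idx m → ZMod p)).finrank
            (ZMod p) := by rw [Finset.coe_image]
      _ ≤ (S.image (gsym p hp)).card := finrank_span_finset_le_card _
      _ ≤ S.card := Finset.card_image_le
end

section
/- Let n > 0 be odd and ω a primitive n-th root of unity in ℂ. Then the polynomial p_{(n+1)/2}(x) (with p as in the recursion p_0 = 2−x, p_1 = x−2, p_{m+1} = x·p_m − p_{m−1}) factors in ℂ[x] as p_{(n+1)/2}(x) = ∏_{k=0}^{(n−1)/2} (x − ω^k − ω^{−k}). -/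
open Polynomial

lemma aux_monic (p : ℕ → Polynomial ℤ)
    (h0 : p 0 = 2 - X) (h1 : p 1 = X - 2)
    (hrec : ∀ m : ℕ, 1 ≤ m → p (m + 1) = X * p m - p (m - 1)) :
    ∀ m : ℕ, (p (m+1)).Monic ∧ (p (m+1)).degree = (m+1 : ℕ) ∧ (p m).degree ≤ (m+1 : ℕ) := by
  intro m
  have e1 : p 1 = X - C 2 := by rw [h1]; norm_num
  induction m with
  | zero =>
    refine ⟨e1 ▸ monic_X_sub_C 2, ?_, ?_⟩
    · rw [e1, degree_X_sub_C]; rfl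
    · rw [h0]
      refine le_trans (degree_sub_le _ _) ?_
      simp only [degree_X]
      exact sup_le (by norm_num [← C_eq_natCast]; exact le_trans (degree_C_le) (by norm_num)) (by norm_num)
  | succ k ih =>
    obtain ⟨hm, hd, hpk⟩ := ih
    have hXm : (X * p (k+1)).Monic := monic_X.mul hm
    have hXd : (X * p (k+1)).degree = ((k+2 : ℕ) : WithBot ℕ) := by
      rw [degree_mul, degree_X, hd]; push_cast; ring
    have hlt : (p k).degree < (X * p (k+1)).degree := by
      rw [hXd]; exact lt_of_le_of_lt hpk (by exact_mod_cast Nat.lt_succ_self _)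
    have hr := hrec (k+1) (by omega)
    simp only [Nat.add_sub_cancel] at hr
    refine ⟨?_, ?_, hd.le.trans (by exact_mod_cast Nat.cast_le.mpr (by omega : k+1 ≤ k+1+1))⟩
    · rw [hr]; exact hXm.sub_of_left hlt
    · rw [hr, degree_sub_eq_left_of_degree_lt hlt, hXd]

lemma aux_eval (p : ℕ → Polynomial ℤ)
    (h0 : p 0 = 2 - X) (h1 : p 1 = X - 2)
    (hrec : ∀ m : ℕ, 1 ≤ m → p (m + 1) = X * p m - p (m - 1))
    (z : ℂ) (hz : z ≠ 0) :
    ∀ m : ℕ, z^(m+1) * ((p m).map (Int.castRingHom ℂ)).eval (z + z⁻¹)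
      = z^(2*m+1) + z - z^(2*m) - z^2 := by
  have hinv : z * z⁻¹ = 1 := mul_inv_cancel₀ hz
  have key : ∀ m : ℕ,
      (z^(m+1) * ((p m).map (Int.castRingHom ℂ)).eval (z + z⁻¹)
        = z^(2*m+1) + z - z^(2*m) - z^2) ∧
      (z^(m+2) * ((p (m+1)).map (Int.castRingHom ℂ)).eval (z + z⁻¹)
        = z^(2*m+3) + z - z^(2*m+2) - z^2) := by
    intro m
    induction m with
    | zero =>
      constructor
      · simp only [h0, Polynomial.map_sub, Polynomial.map_ofNat, map_X, eval_sub, eval_ofNat,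
          eval_X]
        field_simp
        ring
      · simp only [h1, Polynomial.map_sub, Polynomial.map_ofNat, map_X, eval_sub, eval_ofNat,
          eval_X]
        field_simp
        ring
    | succ k ih =>
      obtain ⟨hk, hk1⟩ := ih
      refine ⟨hk1, ?_⟩
      have hr := hrec (k+1) (by omega)
      simp only [Nat.add_sub_cancel] at hr
      rw [hr]
      simp only [Polynomial.map_sub, Polynomial.map_mul, map_X, eval_sub, eval_mul, eval_X]
      set E0 := ((p k).map (Int.castRingHom ℂ)).eval (z + z⁻¹) with hE0
      set E1 := ((p (k+1)).map (Int.castRingHom ℂ)).eval (z + z⁻¹) with hE1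
      linear_combination (z^2 + 1) * hk1 - z^2 * hk + (z^(k+2) * E1) * hinv
  exact fun m => (key m).1

/-- For odd `n > 0` and `ω` a primitive `n`-th root of unity in `ℂ`,
`p ((n+1)/2)` factors over `ℂ` as `∏_{k=0}^{(n-1)/2} (x - ω^k - ω^{-k})`. -/
theorem stmt12 (p : ℕ → Polynomial ℤ)
    (h0 : p 0 = 2 - X) (h1 : p 1 = X - 2)
    (hrec : ∀ m : ℕ, 1 ≤ m → p (m + 1) = X * p m - p (m - 1))
    (n : ℕ) (hn : Odd n) (hpos : 0 < n)
    (ω : ℂ) (hω : IsPrimitiveRoot ω n) :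
    (p ((n + 1) / 2)).map (Int.castRingHom ℂ) =
      ∏ k ∈ Finset.range ((n + 1) / 2), (X - C (ω ^ k) - C (ω⁻¹ ^ k)) := by
  obtain ⟨t, ht⟩ := hn
  have h2m : 2 * ((n + 1) / 2) = n + 1 := by omega
  set m := (n + 1) / 2 with hmdef
  have hm1 : 1 ≤ m := by omega
  have hmn : m ≤ n := by omega
  have hωn : ω ^ n = 1 := hω.pow_eq_one
  have hω0 : ω ≠ 0 := by
    intro h; rw [h, zero_pow hpos.ne'] at hωn; exact zero_ne_one hωn
  set f : ℕ → ℂ := fun k => ω ^ k + ω⁻¹ ^ k with hf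
  set P := (p m).map (Int.castRingHom ℂ) with hP
  have hm' : m - 1 + 1 = m := by omega
  obtain ⟨hmon, hdeg, -⟩ := aux_monic p h0 h1 hrec (m - 1)
  rw [hm'] at hmon hdeg
  have hPmon : P.Monic := hmon.map _
  have hPdeg : P.natDegree = m := by
    have h := hmon.degree_map (Int.castRingHom ℂ)
    rw [hdeg] at h
    exact natDegree_eq_of_degree_eq_some h
  have hroot : ∀ k, k < m → P.IsRoot (f k) := by
    intro k hk
    have hz : ω ^ k ≠ 0 := pow_ne_zero _ hω0
    have he := aux_eval p h0 h1 hrec (ω ^ k) hz m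
    have hzn : (ω ^ k) ^ n = 1 := by rw [← pow_mul, mul_comm, pow_mul, hωn, one_pow]
    have e1 : (ω ^ k) ^ (2 * m) = ω ^ k := by rw [h2m, pow_succ, hzn, one_mul]
    have e2 : (ω ^ k) ^ (2 * m + 1) = (ω ^ k) ^ 2 := by
      rw [h2m, show n + 1 + 1 = n + 2 from rfl, pow_add, hzn, one_mul]
    rw [e1, e2] at he
    have he0 : (ω ^ k) ^ (m + 1) * P.eval (ω ^ k + (ω ^ k)⁻¹) = 0 := by
      rw [he]; ring
    have := (mul_eq_zero.mp he0).resolve_left (pow_ne_zero _ hz)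
    simpa [hf, inv_pow, Polynomial.IsRoot] using this
  have hinj : ∀ k < m, ∀ l < m, f k = f l → k = l := by
    intro k hk l hl hkl
    have ha : ω ^ k ≠ 0 := pow_ne_zero _ hω0
    have hb : ω ^ l ≠ 0 := pow_ne_zero _ hω0
    have hthis : ω ^ k + (ω ^ k)⁻¹ = ω ^ l + (ω ^ l)⁻¹ := by
      simpa [hf, inv_pow] using hkl
    have hainv : ω ^ k * (ω ^ k)⁻¹ = 1 := mul_inv_cancel₀ ha
    have hbinv : ω ^ l * (ω ^ l)⁻¹ = 1 := mul_inv_cancel₀ hb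
    have key : (ω ^ k - ω ^ l) * (ω ^ k * ω ^ l - 1) = 0 := by
      linear_combination (ω ^ k * ω ^ l) * hthis - ω ^ l * hainv + ω ^ k * hbinv
    rcases mul_eq_zero.mp key with h | h
    · exact hω.pow_inj (lt_of_lt_of_le hk hmn) (lt_of_lt_of_le hl hmn) (sub_eq_zero.mp h)
    · have hpow : ω ^ (k + l) = 1 := by rw [pow_add]; exact sub_eq_zero.mp h
      have hdvd := hω.dvd_of_pow_eq_one _ hpow
      have : k + l = 0 := by
        rcases Nat.eq_zero_or_pos (k + l) with h' | h'
        · exact h'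
        · exact absurd (Nat.le_of_dvd h' hdvd) (by omega)
      omega
  set s : Multiset ℂ := (Finset.range m).val.map f with hs
  have hnodup : s.Nodup :=
    Multiset.Nodup.map_on
      (fun x hx y hy hxy => hinj x (by simpa using hx) y (by simpa using hy) hxy)
      (Finset.range m).nodup
  have hP0 : P ≠ 0 := hPmon.ne_zero
  have hle : s ≤ P.roots := by
    rw [Multiset.le_iff_subset hnodup]
    intro a ha
    obtain ⟨k, hk, rfl⟩ := Multiset.mem_map.mp ha
    exact (mem_roots hP0).mpr (hroot k (by simpa using hk))
  have hdvd : (s.map fun a => X - C a).prod ∣ P :=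
    (Multiset.prod_X_sub_C_dvd_iff_le_roots hP0 s).mpr hle
  have hQ : ∏ k ∈ Finset.range m, (X - C (ω ^ k) - C (ω ⁻¹ ^ k))
      = (s.map fun a => X - C a).prod := by
    rw [hs, Multiset.map_map, Finset.prod_eq_multiset_prod]
    congr 1
    apply Multiset.map_congr rfl
    intro k _
    simp only [Function.comp_apply, hf, map_add, sub_sub]
  rw [hQ]
  have hQmon : ((s.map fun a => X - C a).prod).Monic :=
    monic_multiset_prod_of_monic _ _ fun a _ => monic_X_sub_C _
  have hQdeg : ((s.map fun a => X - C a).prod).natDegree = m := by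
    rw [natDegree_multiset_prod_X_sub_C_eq_card, hs]
    simp
  exact eq_of_monic_of_dvd_of_natDegree_le hQmon hPmon hdvd (by rw [hPdeg, hQdeg])
end

section
/- For n ≥ 2, the subgroup of the braid group B_n consisting of braids whose underlying permutation fixes 1 is generated by the elements σ_k for 2 ≤ k ≤ n−1 together with the elements (σ_1σ_2⋯σ_{k−1})(σ_{k−1}⋯σ_2σ_1) for 2 ≤ k ≤ n. -/
open FreeGroup

/-- The braid relations on `n - 1` generators `σ_0, …, σ_{n-2}` (0-indexed):
`σ_i σ_j σ_i = σ_j σ_i σ_j` when `j = i + 1`, and `σ_i σ_j = σ_j σ_i` when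
`j ≥ i + 2`. -/
def braidRels (n : ℕ) : Set (FreeGroup (Fin (n - 1))) :=
  {r | ∃ i j : Fin (n - 1),
    (((j : ℕ) = (i : ℕ) + 1) ∧
      r = of i * of j * of i * (of j * of i * of j)⁻¹) ∨
    (((i : ℕ) + 2 ≤ (j : ℕ)) ∧
      r = of i * of j * (of j * of i)⁻¹)}

/-- The braid group `B_n`, presented by the standard generators and relations. -/
abbrev BraidGroup (n : ℕ) := PresentedGroup (braidRels n)

/-- The standard generator `σ_{k+1}` of `B_n` (`k` is 0-indexed). -/
def σ {n : ℕ} (k : Fin (n - 1)) : BraidGroup n := PresentedGroup.of k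

/-- For `2 ≤ k ≤ n`, the element `(σ_1 σ_2 ⋯ σ_{k-1})(σ_{k-1} ⋯ σ_2 σ_1)` of
`B_n` (1-indexed generators). -/
def tau (n k : ℕ) : BraidGroup n :=
  (((List.range (k - 1)).filterMap
      (fun i => if h : i < n - 1 then some (σ (⟨i, h⟩ : Fin (n - 1))) else none)).prod) *
  ((((List.range (k - 1)).reverse).filterMap
      (fun i => if h : i < n - 1 then some (σ (⟨i, h⟩ : Fin (n - 1))) else none)).prod)

namespace Aux
variable {n : ℕ}

lemma rel_one {r : FreeGroup (Fin (n-1))} (hr : r ∈ braidRels n) :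
    PresentedGroup.mk (braidRels n) r = 1 :=
  (QuotientGroup.eq_one_iff r).2 (Subgroup.subset_normalClosure hr)

lemma braid_rel (i j : Fin (n-1)) (h : (j:ℕ) = (i:ℕ)+1) :
    σ i * σ j * σ i = σ j * σ i * σ j := by
  have h1 := rel_one (n := n) ⟨i, j, Or.inl ⟨h, rfl⟩⟩
  simp only [MonoidHom.map_mul, MonoidHom.map_inv] at h1
  exact mul_inv_eq_one.mp h1

lemma comm_rel (i j : Fin (n-1)) (h : (i:ℕ)+2 ≤ (j:ℕ)) :
    σ i * σ j = σ j * σ i := by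
  have h1 := rel_one (n := n) ⟨i, j, Or.inr ⟨h, rfl⟩⟩
  simp only [MonoidHom.map_mul, MonoidHom.map_inv] at h1
  exact mul_inv_eq_one.mp h1

/-- `σ_m` as a function of a natural number, `1` out of range. -/
def sg (n m : ℕ) : BraidGroup n := if h : m < n - 1 then σ ⟨m, h⟩ else 1

/-- descending product `σ_{j-1} ⋯ σ_1 σ_0`. -/
def desc (n : ℕ) : ℕ → BraidGroup n
  | 0 => 1
  | j+1 => sg n j * desc n j

/-- ascending product `σ_0 σ_1 ⋯ σ_{j-1}`. -/
def asc (n : ℕ) : ℕ → BraidGroup n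
  | 0 => 1
  | j+1 => asc n j * sg n j

def T (n j : ℕ) : BraidGroup n := asc n j * desc n j

lemma sg_braid (m : ℕ) (h : m + 1 < n - 1) :
    sg n m * sg n (m+1) * sg n m = sg n (m+1) * sg n m * sg n (m+1) := by
  have hm : m < n - 1 := by omega
  simp only [sg, dif_pos h, dif_pos hm]
  exact braid_rel ⟨m, hm⟩ ⟨m+1, h⟩ rfl

lemma sg_comm (l m : ℕ) (h : l + 2 ≤ m) : sg n l * sg n m = sg n m * sg n l := by
  by_cases hm : m < n - 1
  · have hl : l < n - 1 := by omega
    simp only [sg, dif_pos hm, dif_pos hl]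
    exact comm_rel ⟨l, hl⟩ ⟨m, hm⟩ h
  · simp [sg, dif_neg hm]

lemma sg_comm_desc (i j : ℕ) (h : j < i) : sg n i * desc n j = desc n j * sg n i := by
  induction j with
  | zero => simp [desc]
  | succ j ih =>
    have h1 : j + 2 ≤ i := h
    have h2 : j < i := by omega
    calc sg n i * (sg n j * desc n j) = sg n j * sg n i * desc n j := by
          rw [← mul_assoc, ← sg_comm j i h1]
      _ = sg n j * (desc n j * sg n i) := by rw [mul_assoc, ih h2]
      _ = sg n j * desc n j * sg n i := by rw [mul_assoc]

lemma move (i : ℕ) (hi : i + 2 ≤ n - 1) :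
    ∀ j, i + 2 ≤ j → sg n i * desc n j = desc n j * sg n (i+1) := by
  intro j
  induction j with
  | zero => omega
  | succ j ih =>
    intro hj
    rcases Nat.lt_or_ge j (i+2) with hj' | hj'
    · -- j = i + 1
      have hj2 : j = i + 1 := by omega
      subst hj2
      show sg n i * (sg n (i+1) * (sg n i * desc n i)) = _
      calc sg n i * (sg n (i+1) * (sg n i * desc n i))
          = (sg n i * sg n (i+1) * sg n i) * desc n i := by group
        _ = (sg n (i+1) * sg n i * sg n (i+1)) * desc n i := by
              rw [sg_braid i (by omega)]
        _ = sg n (i+1) * sg n i * (sg n (i+1) * desc n i) := by group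
        _ = sg n (i+1) * sg n i * (desc n i * sg n (i+1)) := by
              rw [sg_comm_desc (i+1) i (by omega)]
        _ = (sg n (i+1) * (sg n i * desc n i)) * sg n (i+1) := by group
    · calc sg n i * (sg n j * desc n j) = sg n j * sg n i * desc n j := by
            rw [← mul_assoc, ← sg_comm i j hj']
        _ = sg n j * (desc n j * sg n (i+1)) := by rw [mul_assoc, ih hj']
        _ = sg n j * desc n j * sg n (i+1) := by rw [mul_assoc]

lemma sq_desc (j : ℕ) :
    sg n j * sg n j * desc n j = desc n j * ((T n j)⁻¹ * T n (j+1)) := by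
  show _ = desc n j * ((asc n j * desc n j)⁻¹ * (asc n j * sg n j * (sg n j * desc n j)))
  group

/-- products via filterMap equal products via sg. -/
lemma fp (l : List ℕ) :
    (l.filterMap
      (fun i => if h : i < n - 1 then some (σ (⟨i, h⟩ : Fin (n - 1))) else none)).prod
      = (l.map (sg n)).prod := by
  induction l with
  | nil => rfl
  | cons a l ih =>
    by_cases h : a < n - 1 <;>
      simp [List.filterMap_cons, h, ih, sg, dif_pos, dif_neg]

lemma asc_eq (m : ℕ) : ((List.range m).map (sg n)).prod = asc n m := by
  induction m with
  | zero => rfl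
  | succ m ih => rw [List.range_succ]; simp [asc, ih]

lemma desc_eq (m : ℕ) : (((List.range m).reverse).map (sg n)).prod = desc n m := by
  induction m with
  | zero => rfl
  | succ m ih =>
    rw [List.range_succ, List.reverse_append]
    simp only [List.reverse_singleton, List.singleton_append, List.map_cons, List.prod_cons, ih]
    rfl

lemma tau_eq (k : ℕ) : tau n k = T n (k-1) := by
  rw [tau, T, fp, fp, asc_eq, desc_eq]


def Kset (n : ℕ) : Set (BraidGroup n) :=
  {x | ∃ k : Fin (n - 1), 1 ≤ (k : ℕ) ∧ x = σ k} ∪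
  {x | ∃ k : ℕ, 2 ≤ k ∧ k ≤ n ∧ x = tau n k}

def H (n : ℕ) : Subgroup (BraidGroup n) := Subgroup.closure (Kset n)

lemma sg_memH (i : ℕ) (h1 : 1 ≤ i) : sg n i ∈ H n := by
  by_cases h : i < n - 1
  · exact Subgroup.subset_closure (Or.inl ⟨⟨i, h⟩, h1, by simp [sg, dif_pos h]⟩)
  · simp [sg, dif_neg h, one_mem]

lemma T_memH (hn : 2 ≤ n) (j : ℕ) (hj : j ≤ n - 1) : T n j ∈ H n := by
  rcases Nat.eq_zero_or_pos j with h0 | h1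
  · subst h0; show (1 : BraidGroup n) * 1 ∈ H n; simpa using one_mem _
  · have : T n j = tau n (j+1) := by rw [tau_eq]; simp
    rw [this]
    exact Subgroup.subset_closure (Or.inr ⟨j+1, by omega, by omega, rfl⟩)

/-- The permutation action of `σ_i` on coset indices. -/
def s (i j : ℕ) : ℕ := if j = i then i+1 else if j = i+1 then i else j

lemma s_invol (i j : ℕ) : s i (s i j) = j := by
  unfold s
  split_ifs <;> omega

lemma s_lt (i j : ℕ) (hi : i < n - 1) (hj : j < n) : s i j < n := by
  unfold s; split_ifs <;> omega

lemma key (hn : 2 ≤ n) (i j : ℕ) (hi : i < n - 1) (hj : j < n) :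
    ∃ h ∈ H n, sg n i * desc n j = desc n (s i j) * h := by
  rcases Nat.lt_or_ge j i with hji | hji
  · -- j < i : commute
    refine ⟨sg n i, sg_memH i (by omega), ?_⟩
    rw [show s i j = j by unfold s; split_ifs <;> omega]
    exact sg_comm_desc i j hji
  rcases Nat.eq_or_lt_of_le hji with hji' | hji'
  · -- j = i
    refine ⟨1, one_mem _, ?_⟩
    rw [show s i j = j + 1 by unfold s; split_ifs <;> omega, mul_one]
    subst hji'; rfl
  rcases Nat.eq_or_lt_of_le hji' with hji2 | hji2
  · -- j = i + 1
    refine ⟨(T n i)⁻¹ * T n (i+1),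
      mul_mem (inv_mem (T_memH hn i (by omega))) (T_memH hn (i+1) (by omega)), ?_⟩
    rw [show s i j = i by unfold s; split_ifs <;> omega]
    rw [← hji2]
    show sg n i * (sg n i * desc n i) = _
    rw [← mul_assoc, sq_desc]
  · -- j ≥ i + 2
    refine ⟨sg n (i+1), sg_memH (i+1) (by omega), ?_⟩
    rw [show s i j = j by unfold s; split_ifs <;> omega]
    exact move i (by omega) j hji2


lemma sg_of_fin (i : Fin (n-1)) : σ i = sg n (i : ℕ) := by
  simp [sg, dif_pos i.isLt]

lemma main (hn : 2 ≤ n) (g : BraidGroup n) :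
    ∃ j < n, ∃ h ∈ H n, g = desc n j * h := by
  have hg : g ∈ Subgroup.closure (Set.range (σ (n := n))) := by
    have : Set.range (σ (n := n)) = Set.range (PresentedGroup.of (rels := braidRels n)) := rfl
    rw [this, PresentedGroup.closure_range_of]
    trivial
  induction hg using Subgroup.closure_induction_left with
  | one => exact ⟨0, by omega, 1, one_mem _, by simp [desc]⟩
  | mul_left x hx y hy ih =>
    obtain ⟨i, rfl⟩ := hx
    obtain ⟨j, hj, h, hh, rfl⟩ := ih
    obtain ⟨h', hh', heq⟩ := key hn (i : ℕ) j i.isLt hj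
    exact ⟨s (i : ℕ) j, s_lt _ _ i.isLt hj, h' * h, mul_mem hh' hh,
      by rw [← mul_assoc, sg_of_fin, heq, mul_assoc]⟩
  | inv_mul_cancel x hx y hy ih =>
    obtain ⟨i, rfl⟩ := hx
    obtain ⟨j, hj, h, hh, rfl⟩ := ih
    obtain ⟨h', hh', heq⟩ := key hn (i : ℕ) (s (i : ℕ) j) i.isLt (s_lt _ _ i.isLt hj)
    rw [s_invol] at heq
    refine ⟨s (i : ℕ) j, s_lt _ _ i.isLt hj, h'⁻¹ * h, mul_mem (inv_mem hh') hh, ?_⟩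
    rw [sg_of_fin, ← mul_assoc, ← mul_assoc]
    congr 1
    rw [eq_comm, ← eq_mul_inv_iff_mul_eq] at heq
    rw [heq]
    group


section Pi
variable {π : BraidGroup n →* Equiv.Perm (Fin n)}
variable (hπ : ∀ k : Fin (n - 1),
      π (σ k) = Equiv.swap
        (⟨(k : ℕ), by have := k.isLt; omega⟩ : Fin n)
        (⟨(k : ℕ) + 1, by have := k.isLt; omega⟩ : Fin n))
include hπ

lemma pi_sg_sq (m : ℕ) : π (sg n m * sg n m) = 1 := by
  by_cases h : m < n - 1
  · rw [MonoidHom.map_mul]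
    simp only [sg, dif_pos h, hπ ⟨m, h⟩, Equiv.swap_mul_self]
  · simp [sg, dif_neg h]

lemma pi_desc (j : ℕ) (hj : j < n) :
    π (desc n j) ⟨0, by omega⟩ = ⟨j, hj⟩ := by
  induction j with
  | zero => simp [desc]
  | succ j ih =>
    have h : j < n - 1 := by omega
    show π (sg n j * desc n j) _ = _
    rw [MonoidHom.map_mul, Equiv.Perm.mul_apply, ih (by omega)]
    simp only [sg, dif_pos h, hπ ⟨j, h⟩]
    exact Equiv.swap_apply_left _ _

lemma pi_T (j : ℕ) : π (T n j) = 1 := by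
  induction j with
  | zero => show π (1 * 1) = 1; simp
  | succ j ih =>
    have hT : T n (j+1) = asc n j * (sg n j * sg n j) * desc n j := by
      show asc n j * sg n j * (sg n j * desc n j) = _; group
    rw [hT, MonoidHom.map_mul, MonoidHom.map_mul, pi_sg_sq hπ, mul_one, ← MonoidHom.map_mul]
    exact ih

lemma pi_H (hn : 2 ≤ n) {h : BraidGroup n} (hh : h ∈ H n) :
    π h ⟨0, lt_of_lt_of_le two_pos hn⟩ = ⟨0, lt_of_lt_of_le two_pos hn⟩ := by
  induction hh using Subgroup.closure_induction with
  | mem x hx =>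
    rcases hx with ⟨k, hk, rfl⟩ | ⟨k, hk2, hk3, rfl⟩
    · rw [hπ k]
      exact Equiv.swap_apply_of_ne_of_ne (Fin.ne_of_val_ne (show (0:ℕ) ≠ (k:ℕ) by omega))
        (Fin.ne_of_val_ne (show (0:ℕ) ≠ (k:ℕ)+1 by omega))
    · rw [tau_eq, pi_T hπ]; rfl
  | one => simp
  | mul x y hx hy ihx ihy => rw [MonoidHom.map_mul, Equiv.Perm.mul_apply, ihy, ihx]
  | inv x hx ihx =>
    rw [MonoidHom.map_inv]
    exact Equiv.Perm.inv_eq_iff_eq.2 ihx.symm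

end Pi
end Aux

/-- For `n ≥ 2`, the subgroup of `B_n` of braids whose underlying permutation
(under the canonical projection `π : B_n → S_n`, `σ_k ↦ (k, k+1)`) fixes the
first strand is generated by `σ_k` for `2 ≤ k ≤ n - 1` (1-indexed) together
with `(σ_1 ⋯ σ_{k-1})(σ_{k-1} ⋯ σ_1)` for `2 ≤ k ≤ n`. -/
theorem stmt19 (n : ℕ) (hn : 2 ≤ n)
    (π : BraidGroup n →* Equiv.Perm (Fin n))
    (hπ : ∀ k : Fin (n - 1),
      π (σ k) = Equiv.swap
        (⟨(k : ℕ), by have := k.isLt; omega⟩ : Fin n)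
        (⟨(k : ℕ) + 1, by have := k.isLt; omega⟩ : Fin n)) :
    Subgroup.comap π
        (MulAction.stabilizer (Equiv.Perm (Fin n)) ((⟨0, by omega⟩ : Fin n))) =
      Subgroup.closure
        ({x | ∃ k : Fin (n - 1), 1 ≤ (k : ℕ) ∧ x = σ k} ∪
         {x | ∃ k : ℕ, 2 ≤ k ∧ k ≤ n ∧ x = tau n k}) := by
  apply le_antisymm
  · intro g hg
    rw [Subgroup.mem_comap, MulAction.mem_stabilizer_iff, Equiv.Perm.smul_def] at hg
    obtain ⟨j, hj, h, hh, rfl⟩ := Aux.main hn g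
    have h0 := Aux.pi_H hπ hn hh
    have hval : π (Aux.desc n j * h) ⟨0, by omega⟩ = ⟨j, hj⟩ := by
      rw [MonoidHom.map_mul, Equiv.Perm.mul_apply, h0, Aux.pi_desc hπ j hj]
    have hj0 : j = 0 := by
      have h2 := hval.symm.trans hg
      simpa using congrArg Fin.val h2
    subst hj0
    show Aux.desc n 0 * h ∈ Aux.H n
    simpa [Aux.desc] using hh
  · rw [Subgroup.closure_le]
    rintro x (⟨k, hk, rfl⟩ | ⟨k, hk2, hk3, rfl⟩) <;>
      simp only [SetLike.mem_coe, Subgroup.mem_comap, MulAction.mem_stabilizer_iff,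
        Equiv.Perm.smul_def]
    · rw [hπ k]
      exact Equiv.swap_apply_of_ne_of_ne (Fin.ne_of_val_ne (show (0:ℕ) ≠ (k:ℕ) by omega))
        (Fin.ne_of_val_ne (show (0:ℕ) ≠ (k:ℕ)+1 by omega))
    · rw [Aux.tau_eq, Aux.pi_T hπ]; rfl
end
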